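/- arXiv:2202.12651 — 2 statements merged into one kernel-verified Lean document; each statement's English description precedes it below -/
import Mathlib

section
/- Let V be a quasi-regular mixed lattice vector space and A a mixed lattice subspace. Then the set ⊥A_p = {x : x⌃z = 0 for all z ∈ A with z ≥ 0} is a mixed lattice cone in V: it is closed under addition, multiplication by nonnegative scalars, satisfies C ∩ (−C) = {0}, and is closed under the mixed envelopes. -/
/-- A mixed lattice group: an additive commutative group with two partial
orders (initial order `le`, specific order `sle`), both translation
invariant, in which the mixed upper envelope `uenv x y = min{w : x ≼ w, y ≤ w}`
and the mixed lower envelope `lenv x y = max{w : w ≼ x, w ≤ y}`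
(min/max with respect to `le`) exist. -/
structure MLG (G : Type*) [AddCommGroup G] where
  le : G → G → Prop
  sle : G → G → Prop
  le_refl : ∀ x, le x x
  le_trans : ∀ x y z, le x y → le y z → le x z
  le_antisymm : ∀ x y, le x y → le y x → x = y
  sle_refl : ∀ x, sle x x
  sle_trans : ∀ x y z, sle x y → sle y z → sle x z
  sle_antisymm : ∀ x y, sle x y → sle y x → x = y
  add_le_left : ∀ (z : G) {x y}, le x y → le (z + x) (z + y)
  add_sle_left : ∀ (z : G) {x y}, sle x y → sle (z + x) (z + y)
  uenv : G → G → G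
  lenv : G → G → G
  uenv_sle : ∀ x y, sle x (uenv x y)
  uenv_le : ∀ x y, le y (uenv x y)
  uenv_min : ∀ x y w, sle x w → le y w → le (uenv x y) w
  lenv_sle : ∀ x y, sle (lenv x y) x
  lenv_le : ∀ x y, le (lenv x y) y
  lenv_max : ∀ x y w, sle w x → le w y → le w (lenv x y)

/-- Quasi-regularity, in the equivalent form (M8a)&(M8b). -/
def MLG.QuasiRegular {G : Type*} [AddCommGroup G] (M : MLG G) : Prop :=
  (∀ x y z, M.sle x z → M.sle y z → M.sle (M.uenv x y) z) ∧
  (∀ x y z, M.sle z x → M.sle z y → M.sle z (M.lenv x y))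

/-- A mixed lattice vector space over ℝ: a mixed lattice group that is a real
vector space in which both orders are compatible with multiplication by
nonnegative scalars. -/
structure MLS (V : Type*) [AddCommGroup V] [Module ℝ V] extends MLG V where
  smul_le : ∀ (a : ℝ), 0 ≤ a → ∀ x y, le x y → le (a • x) (a • y)
  smul_sle : ∀ (a : ℝ), 0 ≤ a → ∀ x y, sle x y → sle (a • x) (a • y)

namespace MLS

variable {V : Type*} [AddCommGroup V] [Module ℝ V] (M : MLS V)

def QuasiRegular : Prop := M.toMLG.QuasiRegular

/-- `S` is a linear subspace of `V`. -/
def IsSubspace (_ : MLS V) (S : Set V) : Prop :=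
  (0:V) ∈ S ∧ (∀ x ∈ S, ∀ y ∈ S, x + y ∈ S) ∧ (∀ (a : ℝ), ∀ x ∈ S, a • x ∈ S)

/-- A mixed lattice subspace: a subspace closed under both mixed envelopes. -/
def IsMLSubspace (S : Set V) : Prop :=
  M.IsSubspace S ∧ ∀ x ∈ S, ∀ y ∈ S, M.uenv x y ∈ S ∧ M.lenv x y ∈ S

/-- An ideal: a (≤)-order convex mixed lattice subspace. -/
def IsIdeal (S : Set V) : Prop :=
  M.IsMLSubspace S ∧ ∀ x y, M.le 0 y → M.le y x → x ∈ S → y ∈ S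

/-- A specific ideal: a (≼)-order convex mixed lattice subspace. -/
def IsSpecificIdeal (S : Set V) : Prop :=
  M.IsMLSubspace S ∧ ∀ x y, M.sle 0 y → M.sle y x → x ∈ S → y ∈ S

/-- A quasi-ideal: a mixed-order convex mixed lattice subspace. -/
def IsQuasiIdeal (S : Set V) : Prop :=
  M.IsMLSubspace S ∧ ∀ x y, M.sle 0 y → M.le y x → x ∈ S → y ∈ S

/-- The (≼)-positive elements of `S`. -/
def sp (S : Set V) : Set V := {x ∈ S | M.sle 0 x}

/-- The (≤)-positive elements of `S`. -/
def pos (S : Set V) : Set V := {x ∈ S | M.le 0 x}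

/-- `S` is regular: `S = S_sp - S_sp`. -/
def Regular (S : Set V) : Prop :=
  ∀ x ∈ S, ∃ u ∈ M.sp S, ∃ v ∈ M.sp S, x = u - v

/-- A cone: closed under addition and nonnegative scalar multiplication,
with `C ∩ (-C) = {0}`. -/
def IsCone (_ : MLS V) (C : Set V) : Prop :=
  (∀ (a : ℝ), 0 ≤ a → ∀ x ∈ C, a • x ∈ C) ∧ (∀ x ∈ C, ∀ y ∈ C, x + y ∈ C) ∧
  (∀ x, x ∈ C → -x ∈ C → x = 0)

/-- A mixed lattice cone: a cone closed under both mixed envelopes. -/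
def IsMLCone (C : Set V) : Prop :=
  M.IsCone C ∧ ∀ x ∈ C, ∀ y ∈ C, M.uenv x y ∈ C ∧ M.lenv x y ∈ C

/-- The algebraic sum of two sets. -/
def sumS (_ : MLS V) (A B : Set V) : Set V := {x | ∃ a ∈ A, ∃ b ∈ B, x = a + b}

/-- The upper part `ᵘx = x ⌄ 0`. -/
def upp (x : V) : V := M.uenv x 0

/-- The lower part `ˡx = (-x) ⌄ 0`. -/
def lowp (x : V) : V := M.uenv (-x) 0

/-- The specific upper part `x^u = 0 ⌄ x`. -/
def uspec (x : V) : V := M.uenv 0 x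

/-- The specific lower part `x^l = 0 ⌄ (-x)`. -/
def lspec (x : V) : V := M.uenv 0 (-x)

/-- The symmetric generalized absolute value `s(x) = ½(⌐x¬ + ¬x⌐)`,
where `⌐x¬ = ᵘx + x^l` and `¬x⌐ = ˡx + x^u`. -/
noncomputable def sav (x : V) : V := (2:ℝ)⁻¹ • ((M.upp x + M.lspec x) + (M.lowp x + M.uspec x))

end MLS

section Aux

variable {V : Type*} [AddCommGroup V] [Module ℝ V] (M : MLS V)

private lemma aux_shift (c : V) {x y : V} (h : M.sle x y) : M.sle (x + c) (y + c) := by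
  have := M.add_sle_left c h
  simpa [add_comm] using this

/-- In a quasi-regular space, the specific order implies the initial order. -/
private lemma aux_sle_imp_le (hqr : M.QuasiRegular) {x y : V} (h : M.sle x y) : M.le x y := by
  have h1 : M.sle (M.uenv y x) y := hqr.1 y x y (M.sle_refl y) h
  have h2 := M.uenv_sle y x
  have he := M.sle_antisymm _ _ h2 h1
  have := M.uenv_le y x
  rwa [← he] at this

/-- Monotonicity of the lower envelope in its first argument. -/
private lemma aux_lenv_mono1 {x x' z : V} (h : M.sle x x') :
    M.le (M.lenv x z) (M.lenv x' z) :=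
  M.lenv_max x' z _ (M.sle_trans _ _ _ (M.lenv_sle x z) h) (M.lenv_le x z)

end Aux

/-- For a mixed lattice subspace `A` of a quasi-regular mixed lattice vector
space, the set `{x : x⌃z = 0 for all z ∈ A_p}` is a mixed lattice cone. -/
theorem stmt13 {V : Type*} [AddCommGroup V] [Module ℝ V] (M : MLS V)
    (hqr : M.QuasiRegular) (A : Set V) (hA : M.IsMLSubspace A)
    (C : Set V) (hC : C = {x | ∀ z ∈ A, M.le 0 z → M.lenv x z = 0}) :
    M.IsMLCone C := by
  subst hC
  have h0A : (0:V) ∈ A := hA.1.1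
  -- every member of C is specifically positive
  have posC : ∀ x, (∀ z ∈ A, M.le 0 z → M.lenv x z = 0) → M.sle 0 x := by
    intro x hx
    have h := hx 0 h0A (M.le_refl 0)
    have := M.lenv_sle x 0
    rwa [h] at this
  -- 0 ∈ C
  have zeroC : ∀ z ∈ A, M.le 0 z → M.lenv 0 z = 0 := by
    intro z hz hz0
    have h1 : M.le (M.lenv 0 z) 0 := aux_sle_imp_le M hqr (M.lenv_sle 0 z)
    have h2 : M.le 0 (M.lenv 0 z) := M.lenv_max 0 z 0 (M.sle_refl 0) hz0
    exact M.le_antisymm _ _ h1 h2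
  -- closure under addition (the key lemma)
  have addC : ∀ x, (∀ z ∈ A, M.le 0 z → M.lenv x z = 0) →
      ∀ y, (∀ z ∈ A, M.le 0 z → M.lenv y z = 0) →
      ∀ z ∈ A, M.le 0 z → M.lenv (x + y) z = 0 := by
    intro x hx y hy z hzA hz0
    have hx0 : M.sle 0 x := posC x hx
    have hy0 : M.sle 0 y := posC y hy
    have hxy0 : M.sle 0 (x + y) := by
      have : M.sle x (x + y) := by
        have := M.add_sle_left x hy0
        simpa using this
      exact M.sle_trans _ _ _ hx0 this
    set w := M.lenv (x + y) z with hw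
    have w_nonneg : M.le 0 w := M.lenv_max (x + y) z 0 hxy0 hz0
    have w_le_z : M.le w z := M.lenv_le (x + y) z
    have w_sle : M.sle w (x + y) := M.lenv_sle (x + y) z
    have lyz : M.lenv y z = 0 := hy z hzA hz0
    have lxz : M.lenv x z = 0 := hx z hzA hz0
    -- lenv y w = 0
    have lyw : M.lenv y w = 0 := by
      have h1 : M.le (M.lenv y w) (M.lenv y z) :=
        M.lenv_max y z _ (M.lenv_sle y w) (M.le_trans _ _ _ (M.lenv_le y w) w_le_z)
      rw [lyz] at h1
      have h2 : M.le 0 (M.lenv y w) := M.lenv_max y w 0 hy0 w_nonneg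
      exact M.le_antisymm _ _ h1 h2
    -- the element t = (w - x) ⌄ 0 is zero
    have hwx_y : M.sle (w - x) y := by
      have := aux_shift M (-x) w_sle
      simpa [sub_eq_add_neg, add_assoc] using this
    set t := M.uenv (w - x) 0 with ht
    have t_sle_y : M.sle t y := hqr.1 (w - x) 0 y hwx_y hy0
    have t_le_w : M.le t w := by
      refine M.uenv_min (w - x) 0 w ?_ w_nonneg
      have hnx : M.sle (-x) 0 := by
        have := aux_shift M (-x) hx0
        simpa using this
      have := aux_shift M w hnx
      simpa [sub_eq_add_neg, add_comm] using this
    have t_le_0 : M.le t 0 := by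
      have := M.lenv_max y w t t_sle_y t_le_w
      rwa [lyw] at this
    have t_ge_0 : M.le 0 t := M.uenv_le (w - x) 0
    have t_eq : t = 0 := M.le_antisymm _ _ t_le_0 t_ge_0
    -- hence w ≼ x
    have w_sle_x : M.sle w x := by
      have h1 : M.sle (w - x) 0 := by
        have := M.uenv_sle (w - x) 0
        rwa [← ht, t_eq] at this
      have := aux_shift M x h1
      simpa [sub_eq_add_neg, add_assoc] using this
    have w_le_0 : M.le w 0 := by
      have := M.lenv_max x z w w_sle_x w_le_z
      rwa [lxz] at this
    exact M.le_antisymm _ _ w_le_0 w_nonneg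
  -- closure under natural multiples
  have nsmulC : ∀ (n : ℕ) (x : V), (∀ z ∈ A, M.le 0 z → M.lenv x z = 0) →
      ∀ z ∈ A, M.le 0 z → M.lenv ((n : ℝ) • x) z = 0 := by
    intro n
    induction n with
    | zero => intro x _ z hzA hz0; simpa using zeroC z hzA hz0
    | succ n ih =>
      intro x hx z hzA hz0
      have h1 : ((n + 1 : ℕ) : ℝ) • x = (n : ℝ) • x + x := by
        push_cast
        rw [add_smul, one_smul]
      rw [h1]
      exact addC _ (ih x hx) _ hx z hzA hz0
  -- closure under nonnegative scalars
  have smulC : ∀ (a : ℝ), 0 ≤ a → ∀ x, (∀ z ∈ A, M.le 0 z → M.lenv x z = 0) →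
      ∀ z ∈ A, M.le 0 z → M.lenv (a • x) z = 0 := by
    intro a ha x hx z hzA hz0
    have hx0 : M.sle 0 x := posC x hx
    have hax0 : M.sle 0 (a • x) := by
      have := M.smul_sle a ha 0 x hx0
      simpa using this
    set n := ⌈a⌉₊ with hn
    have han : a ≤ (n : ℝ) := Nat.le_ceil a
    have hsle : M.sle (a • x) ((n : ℝ) • x) := by
      have h1 : M.sle 0 (((n : ℝ) - a) • x) := by
        have := M.smul_sle ((n : ℝ) - a) (by linarith) 0 x hx0
        simpa using this
      have h2 := M.add_sle_left (a • x) h1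
      have h3 : a • x + ((n : ℝ) - a) • x = (n : ℝ) • x := by
        rw [← add_smul]; ring_nf
      rw [add_zero, h3] at h2
      exact h2
    have h1 : M.le (M.lenv (a • x) z) (M.lenv ((n : ℝ) • x) z) := aux_lenv_mono1 M hsle
    rw [nsmulC n x hx z hzA hz0] at h1
    have h2 : M.le 0 (M.lenv (a • x) z) := M.lenv_max (a • x) z 0 hax0 hz0
    exact M.le_antisymm _ _ h1 h2
  refine ⟨⟨?_, ?_, ?_⟩, ?_⟩
  · -- scalar multiplication
    intro a ha x hx
    exact smulC a ha x hx
  · -- addition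
    intro x hx y hy
    exact addC x hx y hy
  · -- pointedness
    intro x hx hnx
    have h1 : M.sle 0 x := posC x hx
    have h2 : M.sle 0 (-x) := posC (-x) hnx
    have h3 : M.sle x 0 := by
      have := aux_shift M x h2
      simpa using this
    exact M.sle_antisymm x 0 h3 h1
  · -- envelopes
    intro x hx y hy
    have hx0 : M.sle 0 x := posC x hx
    have hy0 : M.sle 0 y := posC y hy
    constructor
    · -- upper envelope
      intro z hzA hz0
      have hxy : ∀ z ∈ A, M.le 0 z → M.lenv (x + y) z = 0 := addC x hx y hy
      have h1 : M.sle x (x + y) := by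
        have := M.add_sle_left x hy0
        simpa using this
      have h2 : M.sle y (x + y) := by
        have := M.add_sle_left y hx0
        simpa [add_comm] using this
      have h3 : M.sle (M.uenv x y) (x + y) := hqr.1 x y (x + y) h1 h2
      have h4 : M.le (M.lenv (M.uenv x y) z) (M.lenv (x + y) z) := aux_lenv_mono1 M h3
      rw [hxy z hzA hz0] at h4
      have h5 : M.sle 0 (M.uenv x y) := M.sle_trans _ _ _ hx0 (M.uenv_sle x y)
      have h6 : M.le 0 (M.lenv (M.uenv x y) z) := M.lenv_max _ z 0 h5 hz0
      exact M.le_antisymm _ _ h4 h6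
    · -- lower envelope
      intro z hzA hz0
      have h1 : M.le (M.lenv (M.lenv x y) z) (M.lenv x z) := aux_lenv_mono1 M (M.lenv_sle x y)
      rw [hx z hzA hz0] at h1
      have h2 : M.sle 0 (M.lenv x y) := hqr.2 x y 0 hx0 hy0
      have h3 : M.le 0 (M.lenv (M.lenv x y) z) := M.lenv_max _ z 0 h2 hz0
      exact M.le_antisymm _ _ h1 h3
end

section
/- For the symmetric absolute value s(x) = ½(⌐x¬ + ¬x⌐) in a quasi-regular mixed lattice vector space: (i) s(x) = x^u + x^l = ˡx + xˡ' (sums of the specific upper/lower parts, equivalently the upper/lower parts); (ii) s(αx) = |α| s(x) for all real α; (iii) s(x) ≽ 0 and s(x) ≥ 0, with s(x) = 0 iff x = 0; (iv) x ≽ 0 iff x = s(x); (v) s(x + y) ≤ s(x) + s(y); (vi) x⌃y + y⌃x = x + y − s(x − y). -/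
section Aux

variable {V : Type*} [AddCommGroup V] [Module ℝ V] (M : MLS V)

lemma aux_sle_neg {x y : V} (h : M.sle x y) : M.sle (-y) (-x) := by
  have h2 := M.add_sle_left (-x + -y) h
  rwa [show -x + -y + x = -y by abel, show -x + -y + y = -x by abel] at h2

lemma aux_le_neg {x y : V} (h : M.le x y) : M.le (-y) (-x) := by
  have h2 := M.add_le_left (-x + -y) h
  rwa [show -x + -y + x = -y by abel, show -x + -y + y = -x by abel] at h2

lemma aux_sle_add {a b c d : V} (h1 : M.sle a b) (h2 : M.sle c d) :
    M.sle (a + c) (b + d) := by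
  have t1 := M.add_sle_left c h1
  have t2 := M.add_sle_left b h2
  rw [add_comm c a, add_comm c b] at t1
  exact M.sle_trans _ _ _ t1 t2

lemma aux_le_add {a b c d : V} (h1 : M.le a b) (h2 : M.le c d) :
    M.le (a + c) (b + d) := by
  have t1 := M.add_le_left c h1
  have t2 := M.add_le_left b h2
  rw [add_comm c a, add_comm c b] at t1
  exact M.le_trans _ _ _ t1 t2

lemma aux_le_sub_zero {a b : V} (h : M.le a b) : M.le 0 (b - a) := by
  have h2 := M.add_le_left (-a) h
  rwa [show -a + a = (0:V) by abel, show -a + b = b - a by abel] at h2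

lemma aux_sle_sub_zero {a b : V} (h : M.sle a b) : M.sle 0 (b - a) := by
  have h2 := M.add_sle_left (-a) h
  rwa [show -a + a = (0:V) by abel, show -a + b = b - a by abel] at h2

lemma aux_le_of_sub {a b : V} (h : M.le 0 (b - a)) : M.le a b := by
  have h2 := M.add_le_left a h
  rwa [add_zero, show a + (b - a) = b by abel] at h2

lemma aux_sle_of_sub {a b : V} (h : M.sle 0 (b - a)) : M.sle a b := by
  have h2 := M.add_sle_left a h
  rwa [add_zero, show a + (b - a) = b by abel] at h2

lemma aux_uenv_add (z x y : V) : M.uenv (z + x) (z + y) = z + M.uenv x y := by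
  apply M.le_antisymm
  · exact M.uenv_min _ _ _ (M.add_sle_left z (M.uenv_sle x y)) (M.add_le_left z (M.uenv_le x y))
  · have h1 : M.sle x (-z + M.uenv (z+x) (z+y)) := by
      have h := M.add_sle_left (-z) (M.uenv_sle (z+x) (z+y))
      rwa [show -z + (z + x) = x by abel] at h
    have h2 : M.le y (-z + M.uenv (z+x) (z+y)) := by
      have h := M.add_le_left (-z) (M.uenv_le (z+x) (z+y))
      rwa [show -z + (z + y) = y by abel] at h
    have h3 := M.add_le_left z (M.uenv_min _ _ _ h1 h2)
    rwa [show z + (-z + M.uenv (z+x) (z+y)) = M.uenv (z+x) (z+y) by abel] at h3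

lemma aux_uenv_zero : M.uenv (0:V) 0 = 0 :=
  M.le_antisymm _ _ (M.uenv_min 0 0 0 (M.sle_refl 0) (M.le_refl 0)) (M.uenv_le 0 0)

lemma aux_lspec_eq (x : V) : M.lspec x = M.upp x - x := by
  have h := aux_uenv_add M (-x) x 0
  rw [show -x + x = (0:V) by abel, add_zero] at h
  show M.uenv 0 (-x) = M.upp x - x
  rw [h]
  show -x + M.upp x = M.upp x - x
  abel

lemma aux_lowp_eq (x : V) : M.lowp x = M.uspec x - x := by
  have h := aux_uenv_add M (-x) 0 x
  rw [show -x + x = (0:V) by abel, add_zero] at h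
  show M.uenv (-x) 0 = M.uspec x - x
  rw [h]
  show -x + M.uspec x = M.uspec x - x
  abel

lemma aux_sav_eq_spec (x : V) : M.sav x = M.uspec x + M.lspec x := by
  unfold MLS.sav
  rw [aux_lspec_eq M x, aux_lowp_eq M x]
  module

lemma aux_sav_eq_parts (x : V) : M.sav x = M.upp x + M.lowp x := by
  unfold MLS.sav
  rw [aux_lspec_eq M x, aux_lowp_eq M x]
  module

lemma aux_sle_zero_sav (x : V) : M.sle 0 (M.sav x) := by
  rw [aux_sav_eq_spec M x]
  have h := aux_sle_add M (M.uenv_sle 0 x) (M.uenv_sle 0 (-x))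
  rwa [add_zero] at h

lemma aux_le_zero_sav (x : V) : M.le 0 (M.sav x) := by
  rw [aux_sav_eq_parts M x]
  have h := aux_le_add M (M.uenv_le x 0) (M.uenv_le (-x) 0)
  rwa [add_zero] at h

lemma aux_sav_zero' : M.sav (0:V) = 0 := by
  unfold MLS.sav MLS.upp MLS.lowp MLS.uspec MLS.lspec
  rw [neg_zero, aux_uenv_zero M]
  simp

lemma aux_sav_zero (x : V) (h : M.sav x = 0) : x = 0 := by
  have hp : M.upp x + M.lowp x = 0 := by rw [← aux_sav_eq_parts M x]; exact h
  have hs : M.uspec x + M.lspec x = 0 := by rw [← aux_sav_eq_spec M x]; exact h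
  have hupp : M.upp x = 0 := by
    apply M.le_antisymm
    · have h2 := M.add_le_left (M.upp x) (show M.le 0 (M.lowp x) from M.uenv_le (-x) 0)
      rw [add_zero] at h2
      rwa [hp] at h2
    · exact M.uenv_le x 0
  have hlspec : M.lspec x = 0 := by
    apply M.sle_antisymm
    · have h2 := M.add_sle_left (M.lspec x) (show M.sle 0 (M.uspec x) from M.uenv_sle 0 x)
      rw [add_zero, add_comm (M.lspec x) (M.uspec x), hs] at h2
      exact h2
    · exact M.uenv_sle 0 (-x)
  have he := aux_lspec_eq M x
  rw [hlspec, hupp, zero_sub] at he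
  exact neg_eq_zero.mp he.symm

lemma aux_pos_iff (hqr : M.QuasiRegular) (x : V) : M.sle 0 x ↔ x = M.sav x := by
  constructor
  · intro h
    have hupp : M.upp x = x :=
      M.sle_antisymm _ _ (hqr.1 x 0 x (M.sle_refl x) h) (M.uenv_sle x 0)
    have hlspec : M.lspec x = 0 := by rw [aux_lspec_eq M x, hupp, sub_self]
    have hlowp : M.lowp x = 0 := by
      apply M.le_antisymm
      · apply M.uenv_min
        · have h2 := aux_sle_neg M h
          rwa [neg_zero] at h2
        · exact M.le_refl 0
      · exact M.uenv_le (-x) 0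
    have huspec : M.uspec x = x := by
      have h2 := aux_lowp_eq M x
      rw [hlowp] at h2
      exact sub_eq_zero.mp h2.symm
    rw [aux_sav_eq_spec M x, huspec, hlspec, add_zero]
  · intro h
    rw [h]
    exact aux_sle_zero_sav M x

lemma aux_uenv_smul {a : ℝ} (ha : 0 < a) (x y : V) :
    M.uenv (a • x) (a • y) = a • M.uenv x y := by
  apply M.le_antisymm
  · exact M.uenv_min _ _ _ (M.smul_sle a ha.le _ _ (M.uenv_sle x y))
      (M.smul_le a ha.le _ _ (M.uenv_le x y))
  · have h1 : M.le (M.uenv x y) (a⁻¹ • M.uenv (a • x) (a • y)) := by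
      apply M.uenv_min
      · have h := M.smul_sle a⁻¹ (by positivity) _ _ (M.uenv_sle (a • x) (a • y))
        rwa [smul_smul, inv_mul_cancel₀ ha.ne', one_smul] at h
      · have h := M.smul_le a⁻¹ (by positivity) _ _ (M.uenv_le (a • x) (a • y))
        rwa [smul_smul, inv_mul_cancel₀ ha.ne', one_smul] at h
    have h2 := M.smul_le a ha.le _ _ h1
    rwa [smul_smul, mul_inv_cancel₀ ha.ne', one_smul] at h2

lemma aux_upp_smul {a : ℝ} (ha : 0 < a) (x : V) : M.upp (a • x) = a • M.upp x := by
  have h := aux_uenv_smul M ha x 0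
  rwa [smul_zero] at h

lemma aux_lowp_smul {a : ℝ} (ha : 0 < a) (x : V) : M.lowp (a • x) = a • M.lowp x := by
  have h := aux_uenv_smul M ha (-x) 0
  rwa [smul_zero, smul_neg] at h

lemma aux_uspec_smul {a : ℝ} (ha : 0 < a) (x : V) : M.uspec (a • x) = a • M.uspec x := by
  have h := aux_uenv_smul M ha 0 x
  rwa [smul_zero] at h

lemma aux_lspec_smul {a : ℝ} (ha : 0 < a) (x : V) : M.lspec (a • x) = a • M.lspec x := by
  have h := aux_uenv_smul M ha 0 (-x)
  rwa [smul_zero, smul_neg] at h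

lemma aux_sav_smul_pos {a : ℝ} (ha : 0 < a) (x : V) : M.sav (a • x) = a • M.sav x := by
  unfold MLS.sav
  rw [aux_upp_smul M ha, aux_lspec_smul M ha, aux_lowp_smul M ha, aux_uspec_smul M ha]
  module

lemma aux_sav_neg (x : V) : M.sav (-x) = M.sav x := by
  unfold MLS.sav MLS.upp MLS.lowp MLS.uspec MLS.lspec
  rw [neg_neg]
  congr 1
  abel

lemma aux_sav_smul (a : ℝ) (x : V) : M.sav (a • x) = |a| • M.sav x := by
  rcases lt_trichotomy a 0 with h | h | h
  · rw [abs_of_neg h, show a • x = -((-a) • x) by module, aux_sav_neg M,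
      aux_sav_smul_pos M (neg_pos.mpr h)]
  · subst h
    rw [abs_zero, zero_smul, zero_smul, aux_sav_zero' M]
  · rw [abs_of_pos h, aux_sav_smul_pos M h]

lemma aux_upp_subadd (x y : V) : M.le (M.upp (x + y)) (M.upp x + M.upp y) := by
  show M.le (M.uenv (x + y) 0) _
  apply M.uenv_min
  · exact aux_sle_add M (M.uenv_sle x 0) (M.uenv_sle y 0)
  · have h := aux_le_add M (M.uenv_le x 0) (M.uenv_le y 0)
    rwa [add_zero] at h

lemma aux_sav_subadd (x y : V) : M.le (M.sav (x + y)) (M.sav x + M.sav y) := by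
  rw [aux_sav_eq_parts M (x+y), aux_sav_eq_parts M x, aux_sav_eq_parts M y]
  have h1 := aux_upp_subadd M x y
  have h2 := aux_upp_subadd M (-x) (-y)
  have h2' : M.le (M.lowp (x + y)) (M.lowp x + M.lowp y) := by
    rw [show -x + -y = -(x+y) by abel] at h2
    exact h2
  have h3 := aux_le_add M h1 h2'
  rwa [show M.upp x + M.upp y + (M.lowp x + M.lowp y)
      = M.upp x + M.lowp x + (M.upp y + M.lowp y) by abel] at h3

lemma aux_lenv_eq (x y : V) : M.lenv x y = x - M.uspec (x - y) := by
  apply M.le_antisymm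
  · have hU : M.le (M.uspec (x - y)) (x - M.lenv x y) := by
      apply M.uenv_min
      · exact aux_sle_sub_zero M (M.lenv_sle x y)
      · have h2 := aux_le_neg M (M.lenv_le x y)
        have h3 := M.add_le_left x h2
        rwa [← sub_eq_add_neg, ← sub_eq_add_neg] at h3
    have h0 := aux_le_sub_zero M hU
    rw [show x - M.lenv x y - M.uspec (x - y)
        = (x - M.uspec (x - y)) - M.lenv x y by abel] at h0
    exact aux_le_of_sub M h0
  · apply M.lenv_max
    · have h1 := aux_sle_neg M (M.uenv_sle 0 (x - y))
      rw [neg_zero] at h1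
      have h2 := M.add_sle_left x h1
      rwa [← sub_eq_add_neg, add_zero] at h2
    · have h1 : M.le (x - y) (M.uspec (x - y)) := M.uenv_le 0 (x - y)
      have h0 := aux_le_sub_zero M h1
      rw [show M.uspec (x - y) - (x - y) = y - (x - M.uspec (x - y)) by abel] at h0
      exact aux_le_of_sub M h0

lemma aux_six (x y : V) : M.lenv x y + M.lenv y x = x + y - M.sav (x - y) := by
  rw [aux_lenv_eq M x y, aux_lenv_eq M y x, aux_sav_eq_spec M (x - y)]
  have e : M.uspec (y - x) = M.lspec (x - y) := by
    show M.uenv 0 (y - x) = M.uenv 0 (-(x - y))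
    rw [neg_sub]
  rw [e]
  abel

end Aux

/-- Basic properties of the symmetric absolute value
`s(x) = ½(⌐x¬ + ¬x⌐)` in a quasi-regular mixed lattice vector space. -/
theorem stmt16 {V : Type*} [AddCommGroup V] [Module ℝ V] (M : MLS V)
    (hqr : M.QuasiRegular) (x y : V) :
    (M.sav x = M.uspec x + M.lspec x ∧ M.sav x = M.upp x + M.lowp x) ∧
    (∀ a : ℝ, M.sav (a • x) = |a| • M.sav x) ∧
    (M.sle 0 (M.sav x) ∧ M.le 0 (M.sav x) ∧ (M.sav x = 0 ↔ x = 0)) ∧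
    (M.sle 0 x ↔ x = M.sav x) ∧
    M.le (M.sav (x + y)) (M.sav x + M.sav y) ∧
    M.lenv x y + M.lenv y x = x + y - M.sav (x - y) := by
  refine ⟨⟨aux_sav_eq_spec M x, aux_sav_eq_parts M x⟩, fun a => aux_sav_smul M a x,
    ⟨aux_sle_zero_sav M x, aux_le_zero_sav M x,
      ⟨aux_sav_zero M x, fun h => by rw [h]; exact aux_sav_zero' M⟩⟩,
    aux_pos_iff M hqr x, aux_sav_subadd M x y, aux_six M x y⟩
end
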